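/- arXiv:2309.03630 — 4 statements merged into one kernel-verified Lean document; each statement's English description precedes it below -/
import Mathlib

section
/- Let a, λ > 0 and γ = (3/2) λ a. Set V = (4/3)πa³, C = (36π)^{1/3}, and define Φ : [0,∞) → ℝ by Φ(t) = γ C t^{2/3} + (λ/2) V (t/V − 1)² − (2γ/a) t. Then Φ is monotone nondecreasing on [0,∞) and Φ(V) > Φ(0); in particular, t = V is not a minimizer of Φ on [0,∞). -/
/-- If `γ = (3/2) λ a`, then `Φ(t) = γ C t^{2/3} + (λ/2) V (t/V − 1)² − (2γ/a) t`
is nondecreasing on `[0,∞)` and `Φ(V) > Φ(0)`; in particular `t = V` is not a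
minimizer of `Φ` on `[0,∞)`. -/
theorem not_minimizer_of_critical_surface_tension
    (a γ lam V C : ℝ) (ha : 0 < a) (hlam : 0 < lam)
    (hγ : γ = 3/2 * lam * a)
    (hV : V = 4/3 * Real.pi * a^3) (hC : C = (36 * Real.pi) ^ ((1:ℝ)/3))
    (Φ : ℝ → ℝ)
    (hΦ : ∀ t : ℝ, Φ t = γ * C * t ^ ((2:ℝ)/3) + lam/2 * V * (t/V - 1)^2 - (2*γ/a) * t) :
    MonotoneOn Φ (Set.Ici (0:ℝ)) ∧ Φ 0 < Φ V ∧ ∃ t : ℝ, 0 ≤ t ∧ Φ t < Φ V := by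
  have hπ := Real.pi_pos
  have hVpos : 0 < V := by rw [hV]; positivity
  have hV13 : V ^ ((1:ℝ)/3) = (4/3 * Real.pi) ^ ((1:ℝ)/3) * a := by
    rw [hV, Real.mul_rpow (by positivity) (by positivity)]
    congr 1
    rw [← Real.rpow_natCast a 3, ← Real.rpow_mul ha.le]
    norm_num
  have hγC : γ * C = 9/2 * lam * V ^ ((1:ℝ)/3) := by
    rw [hγ, hC, hV13, show (36 * Real.pi : ℝ) = 27 * (4/3 * Real.pi) by ring,
      Real.mul_rpow (by norm_num) (by positivity)]
    have h27 : (27:ℝ) ^ ((1:ℝ)/3) = 3 := by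
      rw [show (27:ℝ) = 3 ^ (3:ℕ) by norm_num, ← Real.rpow_natCast 3 3,
        ← Real.rpow_mul (by norm_num)]
      norm_num
    rw [h27]; ring
  have hγa : 2 * γ / a = 3 * lam := by
    rw [hγ]; field_simp
  have hΦfun : Φ = fun t => γ * C * t ^ ((2:ℝ)/3) + lam/2 * V * (t/V - 1)^2 - (2*γ/a) * t :=
    funext hΦ
  -- derivative
  have hd : ∀ t : ℝ, 0 < t → HasDerivAt Φ
      (γ*C*((2:ℝ)/3 * t ^ ((2:ℝ)/3 - 1)) + lam/2*V*(2*(t/V - 1)^1*(1/V)) - 2*γ/a * 1) t := by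
    intro t ht
    have h1 : HasDerivAt (fun x : ℝ => x ^ ((2:ℝ)/3)) ((2:ℝ)/3 * t ^ ((2:ℝ)/3 - 1)) t :=
      Real.hasDerivAt_rpow_const (Or.inl ht.ne')
    have hid : HasDerivAt (fun x : ℝ => x/V - 1) (1/V) t := by
      simpa using ((hasDerivAt_id t).div_const V).sub_const 1
    have h2 : HasDerivAt (fun x : ℝ => (x/V - 1)^2) (2*(t/V - 1)^1*(1/V)) t := by
      simpa using hid.fun_pow 2
    have h3 : HasDerivAt (fun x : ℝ => (2*γ/a) * x) (2*γ/a * 1) t :=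
      (hasDerivAt_id t).const_mul (2*γ/a)
    rw [hΦfun]
    exact ((h1.const_mul (γ*C)).add (h2.const_mul (lam/2*V))).sub h3
  have hderiv_nonneg : ∀ t : ℝ, 0 < t →
      0 ≤ γ*C*((2:ℝ)/3 * t ^ ((2:ℝ)/3 - 1)) + lam/2*V*(2*(t/V - 1)^1*(1/V)) - 2*γ/a * 1 := by
    intro t ht
    set u := t ^ ((1:ℝ)/3) with hu
    set w := V ^ ((1:ℝ)/3) with hw
    have hupos : 0 < u := Real.rpow_pos_of_pos ht _
    have hwpos : 0 < w := Real.rpow_pos_of_pos hVpos _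
    have hu3 : u ^ (3:ℕ) = t := by
      rw [hu, ← Real.rpow_natCast (t ^ ((1:ℝ)/3)) 3, ← Real.rpow_mul ht.le]
      norm_num
    have hw3 : w ^ (3:ℕ) = V := by
      rw [hw, ← Real.rpow_natCast (V ^ ((1:ℝ)/3)) 3, ← Real.rpow_mul hVpos.le]
      norm_num
    have htpow : t ^ ((2:ℝ)/3 - 1) = u⁻¹ := by
      rw [show (2:ℝ)/3 - 1 = -(1/3) by norm_num, Real.rpow_neg ht.le, hu]
    have key : 0 ≤ u^4 - 4*u*w^3 + 3*w^4 := by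
      nlinarith [mul_nonneg (sq_nonneg (u - w))
        (by positivity : (0:ℝ) ≤ u^2 + 2*u*w + 3*w^2)]
    have heq : γ*C*((2:ℝ)/3 * t ^ ((2:ℝ)/3 - 1)) + lam/2*V*(2*(t/V - 1)^1*(1/V)) - 2*γ/a * 1
        = lam * (u^4 - 4*u*w^3 + 3*w^4) / (u * w^3) := by
      rw [htpow, hγC, hγa, ← hu3, ← hw3, hw]
      field_simp
      ring
    rw [heq]
    exact div_nonneg (mul_nonneg hlam.le key) (by positivity)
  have hmono : MonotoneOn Φ (Set.Ici (0:ℝ)) := by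
    apply monotoneOn_of_deriv_nonneg (convex_Ici 0)
    · rw [hΦfun]
      have hrc : Continuous fun x : ℝ => x ^ ((2:ℝ)/3) :=
        continuous_iff_continuousAt.2 fun x =>
          Real.continuousAt_rpow_const x _ (Or.inr (by norm_num))
      fun_prop
    · rw [interior_Ici]
      intro t ht
      exact ((hd t ht).differentiableAt).differentiableWithinAt
    · rw [interior_Ici]
      intro t ht
      rw [(hd t ht).deriv]
      exact hderiv_nonneg t ht
  have hΦ0 : Φ 0 = lam/2 * V := by
    rw [hΦ 0, Real.zero_rpow (by norm_num)]
    field_simp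
    ring
  have hΦV : Φ V = 3/2 * lam * V := by
    rw [hΦ V, div_self hVpos.ne', hγC, hγa]
    have : V ^ ((1:ℝ)/3) * V ^ ((2:ℝ)/3) = V := by
      rw [← Real.rpow_add hVpos]
      norm_num
    nlinarith [this]
  have hlt : Φ 0 < Φ V := by
    rw [hΦ0, hΦV]; nlinarith [mul_pos hlam hVpos]
  exact ⟨hmono, hlt, 0, le_refl 0, hlt⟩
end

section
/- Let A, B ∈ M³ˣ³ with det A ≠ 0. Then cof(A + B) = cof A + cof B + (1/det A) ( (cof A · B) cof A − (cof A) Bᵀ (cof A) ), where cof A · B denotes the Frobenius inner product tr(Bᵀ cof A). -/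
open Matrix

/-- The cofactor matrix: transpose of the adjugate. -/
noncomputable def cof (A : Matrix (Fin 3) (Fin 3) ℝ) : Matrix (Fin 3) (Fin 3) ℝ :=
  (Matrix.adjugate A)ᵀ

lemma cof_eq (M : Matrix (Fin 3) (Fin 3) ℝ) :
    cof M = !![M 1 1 * M 2 2 - M 1 2 * M 2 1, M 1 2 * M 2 0 - M 1 0 * M 2 2, M 1 0 * M 2 1 - M 1 1 * M 2 0;
               M 0 2 * M 2 1 - M 0 1 * M 2 2, M 0 0 * M 2 2 - M 0 2 * M 2 0, M 0 1 * M 2 0 - M 0 0 * M 2 1;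
               M 0 1 * M 1 2 - M 0 2 * M 1 1, M 0 2 * M 1 0 - M 0 0 * M 1 2, M 0 0 * M 1 1 - M 0 1 * M 1 0] := by
  ext i j
  fin_cases i <;> fin_cases j <;>
    simp [cof, Matrix.adjugate_fin_three] <;> ring

set_option maxHeartbeats 4000000 in
/-- Expansion of the cofactor of a sum `A + B` when `det A ≠ 0`. -/
theorem cof_add_expansion (A B : Matrix (Fin 3) (Fin 3) ℝ) (hA : A.det ≠ 0) :
    cof (A + B) = cof A + cof B +
      (A.det)⁻¹ • ((Matrix.trace (Bᵀ * cof A)) • cof A - cof A * Bᵀ * cof A) := by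
  have key : A.det • cof (A + B) =
      A.det • (cof A + cof B) +
      ((Matrix.trace (Bᵀ * cof A)) • cof A - cof A * Bᵀ * cof A) := by
    ext i j
    fin_cases i <;> fin_cases j <;>
      simp [cof_eq, Matrix.det_fin_three, Matrix.mul_apply,
        Matrix.trace_fin_three, Matrix.vecMul, dotProduct, Matrix.vecHead, Matrix.vecTail, Fin.sum_univ_succ] <;>
      ring
  have := congrArg (fun M => (A.det)⁻¹ • M) key
  simpa [smul_smul, inv_mul_cancel₀ hA, smul_add, add_assoc] using this
end

section
/- Let M ∈ M³ˣ³ and let ν ∈ ℝ³ be a unit vector with M ν = 0. Then 2 (cof M) ν · ν = 2 tr(cof M) = (tr M)² − tr(M²). -/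
open Matrix

/-- If `ν` is a unit vector with `Mν = 0`, then
`2 (cof M) ν · ν = 2 tr (cof M) = (tr M)² − tr (M²)`. -/
theorem cof_mulVec_dot_of_kernel (M : Matrix (Fin 3) (Fin 3) ℝ) (ν : Fin 3 → ℝ)
    (hν : ν ⬝ᵥ ν = 1) (hM : M.mulVec ν = 0) :
    2 * ((cof M).mulVec ν ⬝ᵥ ν) = 2 * Matrix.trace (cof M) ∧
    2 * Matrix.trace (cof M) = (Matrix.trace M)^2 - Matrix.trace (M * M) := by
  have h0 := congrFun hM 0
  have h1 := congrFun hM 1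
  have h2 := congrFun hM 2
  simp only [Matrix.mulVec, dotProduct, Fin.sum_univ_three, Pi.zero_apply] at h0 h1 h2
  simp only [dotProduct, Fin.sum_univ_three] at hν
  constructor
  · simp only [cof, Matrix.trace_fin_three, Matrix.mulVec, dotProduct,
      Fin.sum_univ_three, Matrix.adjugate_fin_three, Matrix.transpose_apply,
      Matrix.of_apply, Matrix.cons_val', Matrix.cons_val_zero, Matrix.cons_val_one,
      Matrix.head_cons, Matrix.empty_val', Matrix.cons_val_fin_one,
      Matrix.head_fin_const, Matrix.cons_val_two, Matrix.tail_cons]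
    set c := M 0 0 * M 1 1 + M 1 1 * M 2 2 + M 0 0 * M 2 2
      - M 0 1 * M 1 0 - M 1 2 * M 2 1 - M 0 2 * M 2 0 with hc
    linear_combination
      (2 * (ν 0 * M 0 0 + ν 1 * M 1 0 + ν 2 * M 2 0 - (M 0 0 + M 1 1 + M 2 2) * ν 0)) * h0 +
      (2 * (ν 0 * M 0 1 + ν 1 * M 1 1 + ν 2 * M 2 1 - (M 0 0 + M 1 1 + M 2 2) * ν 1)) * h1 +
      (2 * (ν 0 * M 0 2 + ν 1 * M 1 2 + ν 2 * M 2 2 - (M 0 0 + M 1 1 + M 2 2) * ν 2)) * h2 +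
      (2 * c) * hν
  · simp only [cof, Matrix.trace_fin_three, Matrix.mul_apply, Fin.sum_univ_three,
      Matrix.adjugate_fin_three, Matrix.transpose_apply, Matrix.of_apply,
      Matrix.cons_val', Matrix.cons_val_zero, Matrix.cons_val_one,
      Matrix.head_cons, Matrix.empty_val', Matrix.cons_val_fin_one,
      Matrix.head_fin_const, Matrix.cons_val_two, Matrix.tail_cons]
    ring
end

section
/- Let U ⊂ ℝ³ be open and connected, let y : U → ℝ³ be twice continuously differentiable with det ∇y > 0 on U, and let p ∈ ℝ, λ > 0. If the matrix field P(x) = (−p + λ(det ∇y(x) − 1)) cof ∇y(x) satisfies div P = 0 on U (row-wise divergence, (div P)_i = ∑_j ∂_j P_{ij}), then det ∇y is constant on U. -/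
open Matrix

/-- The Jacobian matrix `(∇y)_{ij} = ∂y_i/∂x_j` of a map `y : ℝ³ → ℝ³`. -/
noncomputable def jac (y : (Fin 3 → ℝ) → (Fin 3 → ℝ)) (x : Fin 3 → ℝ) :
    Matrix (Fin 3) (Fin 3) ℝ :=
  fun i j => fderiv ℝ y x (Pi.single j 1) i

lemma cof_apply' (A : Matrix (Fin 3) (Fin 3) ℝ) (i j : Fin 3) :
    cof A i j = A (i+1) (j+1) * A (i+2) (j+2) - A (i+1) (j+2) * A (i+2) (j+1) := by
  fin_cases i <;> fin_cases j <;>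
    simp [cof, Matrix.adjugate_fin_three, Matrix.transpose_apply] <;> ring

section Main
variable (U : Set (Fin 3 → ℝ)) (hU : IsOpen U)
    (y : (Fin 3 → ℝ) → (Fin 3 → ℝ)) (hy : ContDiffOn ℝ 2 y U)

lemma piola_fderiv_det_eq_zero' (hU : IsOpen U) (hy : ContDiffOn ℝ 2 y U) (hdet : ∀ x ∈ U, 0 < (jac y x).det)
    (p lam : ℝ) (hlam : 0 < lam)
    (P : (Fin 3 → ℝ) → Matrix (Fin 3) (Fin 3) ℝ)
    (hP : ∀ x, P x = (-p + lam * ((jac y x).det - 1)) • cof (jac y x))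
    (hdiv : ∀ x ∈ U, ∀ i : Fin 3,
      (∑ j : Fin 3, fderiv ℝ (fun z => P z i j) x (Pi.single j 1)) = 0)
    (x : Fin 3 → ℝ) (hx : x ∈ U) :
    DifferentiableAt ℝ (fun z => (jac y z).det) x ∧ fderiv ℝ (fun z => (jac y z).det) x = 0 := by
  set u : Fin 3 → (Fin 3 → ℝ) := fun j => Pi.single j 1 with hu
  -- differentiability of the Jacobian entries at every point of U
  have hA : ∀ z ∈ U, ∀ p q : Fin 3,
      HasFDerivAt (fun w => fderiv ℝ y w (u q) p)
        ((ContinuousLinearMap.proj p ∘L ContinuousLinearMap.apply ℝ (Fin 3 → ℝ) (u q))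
          ∘L (fderiv ℝ (fderiv ℝ y) z)) z := by
    intro z hz p q
    have h1 : DifferentiableAt ℝ (fderiv ℝ y) z :=
      ((hy.contDiffAt (hU.mem_nhds hz)).fderiv_right (m := 1) (le_refl 2)).differentiableAt one_ne_zero
    exact ((ContinuousLinearMap.proj p ∘L
      ContinuousLinearMap.apply ℝ (Fin 3 → ℝ) (u q)).hasFDerivAt).comp z h1.hasFDerivAt
  -- det ∘ jac rewritten as polynomial in entries
  have hgeq : (fun z => (jac y z).det) = fun z =>
      fderiv ℝ y z (u 0) 0 * fderiv ℝ y z (u 1) 1 * fderiv ℝ y z (u 2) 2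
      - fderiv ℝ y z (u 0) 0 * fderiv ℝ y z (u 2) 1 * fderiv ℝ y z (u 1) 2
      - fderiv ℝ y z (u 1) 0 * fderiv ℝ y z (u 0) 1 * fderiv ℝ y z (u 2) 2
      + fderiv ℝ y z (u 1) 0 * fderiv ℝ y z (u 2) 1 * fderiv ℝ y z (u 0) 2
      + fderiv ℝ y z (u 2) 0 * fderiv ℝ y z (u 0) 1 * fderiv ℝ y z (u 1) 2
      - fderiv ℝ y z (u 2) 0 * fderiv ℝ y z (u 1) 1 * fderiv ℝ y z (u 0) 2 := by
    funext z
    exact Matrix.det_fin_three (jac y z)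
  have hgd : ∀ z ∈ U, DifferentiableAt ℝ (fun w => (jac y w).det) z := by
    intro z hz
    rw [hgeq]
    have h : ∀ p q : Fin 3, DifferentiableAt ℝ (fun w => fderiv ℝ y w (u q) p) z :=
      fun p q => (hA z hz p q).differentiableAt
    exact (((((((h 0 0).mul (h 1 1)).mul (h 2 2)).sub
      (((h 0 0).mul (h 1 2)).mul (h 2 1))).sub
      (((h 0 1).mul (h 1 0)).mul (h 2 2))).add
      (((h 0 1).mul (h 1 2)).mul (h 2 0))).add
      (((h 0 2).mul (h 1 0)).mul (h 2 1))).sub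
      (((h 0 2).mul (h 1 1)).mul (h 2 0))
  -- second derivative at x
  have hf''d : DifferentiableAt ℝ (fderiv ℝ y) x :=
    ((hy.contDiffAt (hU.mem_nhds hx)).fderiv_right (m := 1) (le_refl 2)).differentiableAt one_ne_zero
  set f'' := fderiv ℝ (fderiv ℝ y) x with hf''def
  have hev : ∀ᶠ z in nhds x, HasFDerivAt y (fderiv ℝ y z) z := by
    filter_upwards [hU.mem_nhds hx] with z hz
    exact ((hy.contDiffAt (hU.mem_nhds hz)).differentiableAt two_ne_zero).hasFDerivAt
  have hsymm : ∀ v w, f'' v w = f'' w v :=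
    second_derivative_symmetric_of_eventually hev hf''d.hasFDerivAt
  set D : Fin 3 → Fin 3 → Fin 3 → ℝ := fun p q j => f'' (u j) (u q) p with hD
  set c : Fin 3 → Fin 3 → ℝ := fun p q => fderiv ℝ y x (u q) p with hc
  have hDsymm : ∀ p q j, D p q j = D p j q := fun p q j => congrFun (hsymm (u j) (u q)) p
  -- cof entries as functions
  have hcofeq : ∀ i j : Fin 3, (fun z => cof (jac y z) i j) = fun z =>
      fderiv ℝ y z (u (j+1)) (i+1) * fderiv ℝ y z (u (j+2)) (i+2)
      - fderiv ℝ y z (u (j+2)) (i+1) * fderiv ℝ y z (u (j+1)) (i+2) := by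
    intro i j; funext z; exact cof_apply' (jac y z) i j
  have hCdfd : ∀ i j : Fin 3, HasFDerivAt (fun z => cof (jac y z) i j)
      ((fderiv ℝ y x (u (j+1)) (i+1)) •
          ((ContinuousLinearMap.proj (i+2) ∘L ContinuousLinearMap.apply ℝ (Fin 3 → ℝ) (u (j+2))) ∘L f'')
        + (fderiv ℝ y x (u (j+2)) (i+2)) •
          ((ContinuousLinearMap.proj (i+1) ∘L ContinuousLinearMap.apply ℝ (Fin 3 → ℝ) (u (j+1))) ∘L f'')
        - ((fderiv ℝ y x (u (j+2)) (i+1)) •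
          ((ContinuousLinearMap.proj (i+2) ∘L ContinuousLinearMap.apply ℝ (Fin 3 → ℝ) (u (j+1))) ∘L f'')
        + (fderiv ℝ y x (u (j+1)) (i+2)) •
          ((ContinuousLinearMap.proj (i+1) ∘L ContinuousLinearMap.apply ℝ (Fin 3 → ℝ) (u (j+2))) ∘L f''))) x := by
    intro i j
    rw [hcofeq i j]
    exact ((hA x hx (i+1) (j+1)).mul (hA x hx (i+2) (j+2))).sub
      ((hA x hx (i+1) (j+2)).mul (hA x hx (i+2) (j+1)))
  have hCval : ∀ i j : Fin 3, fderiv ℝ (fun z => cof (jac y z) i j) x (u j)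
      = c (i+1) (j+1) * D (i+2) (j+2) j + c (i+2) (j+2) * D (i+1) (j+1) j
        - (c (i+1) (j+2) * D (i+2) (j+1) j + c (i+2) (j+1) * D (i+1) (j+2) j) := by
    intro i j
    rw [(hCdfd i j).fderiv]
    rfl
  -- Piola identity at x
  have hPiola : ∀ i : Fin 3,
      ∑ j : Fin 3, fderiv ℝ (fun z => cof (jac y z) i j) x (u j) = 0 := by
    intro i
    rw [Fin.sum_univ_three, hCval, hCval, hCval]
    simp only [show (0:Fin 3)+1 = 1 from rfl, show (0:Fin 3)+2 = 2 from rfl,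
      show (1:Fin 3)+1 = 2 from rfl, show (1:Fin 3)+2 = 0 from rfl,
      show (2:Fin 3)+1 = 0 from rfl, show (2:Fin 3)+2 = 1 from rfl]
    simp only [hDsymm (i+1) 1 0, hDsymm (i+1) 2 0, hDsymm (i+1) 2 1,
      hDsymm (i+2) 1 0, hDsymm (i+2) 2 0, hDsymm (i+2) 2 1]
    ring
  -- derivative of det∘jac at x
  set g' := fderiv ℝ (fun z => (jac y z).det) x with hg'
  have hg'at : HasFDerivAt (fun z => (jac y z).det) g' x := (hgd x hx).hasFDerivAt
  have hF : HasFDerivAt (fun z => -p + lam * ((jac y z).det - 1)) (lam • g') x :=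
    ((hg'at.sub_const 1).const_mul lam).const_add (-p)
  have hPfun : ∀ i j : Fin 3, (fun z => P z i j)
      = fun z => (-p + lam * ((jac y z).det - 1)) * cof (jac y z) i j := by
    intro i j; funext z; rw [hP z]; rfl
  have hterm : ∀ i j : Fin 3, fderiv ℝ (fun z => P z i j) x (u j)
      = (-p + lam * ((jac y x).det - 1)) * fderiv ℝ (fun z => cof (jac y z) i j) x (u j)
        + cof (jac y x) i j * (lam * g' (u j)) := by
    intro i j
    rw [hPfun i j, (hF.fun_mul (hCdfd i j)).fderiv, (hCdfd i j).fderiv]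
    simp only [ContinuousLinearMap.add_apply, ContinuousLinearMap.smul_apply,
      ContinuousLinearMap.sub_apply, smul_eq_mul]
  have hmain : ∀ i : Fin 3, ∑ j : Fin 3, cof (jac y x) i j * (lam * g' (u j)) = 0 := by
    intro i
    have h0 := hdiv x hx i
    change ∑ j : Fin 3, fderiv ℝ (fun z => P z i j) x (u j) = 0 at h0
    simp only [hterm] at h0
    rw [Finset.sum_add_distrib, ← Finset.mul_sum, hPiola i, mul_zero, zero_add] at h0
    exact h0
  set v : Fin 3 → ℝ := fun j => lam * g' (u j) with hv
  have hmv : (cof (jac y x)).mulVec v = 0 := by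
    funext i
    simpa [Matrix.mulVec, dotProduct] using hmain i
  have hAM : (jac y x)ᵀ * cof (jac y x) = (jac y x).det • 1 := by
    rw [cof, ← Matrix.transpose_mul, Matrix.adjugate_mul, Matrix.transpose_smul,
      Matrix.transpose_one]
  have hdv : (jac y x).det • v = 0 := by
    calc (jac y x).det • v = ((jac y x).det • (1 : Matrix (Fin 3) (Fin 3) ℝ)).mulVec v := by
          rw [Matrix.smul_mulVec, Matrix.one_mulVec]
      _ = ((jac y x)ᵀ * cof (jac y x)).mulVec v := by rw [hAM]
      _ = (jac y x)ᵀ.mulVec ((cof (jac y x)).mulVec v) := by rw [Matrix.mulVec_mulVec]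
      _ = 0 := by rw [hmv, Matrix.mulVec_zero]
  have hvz : v = 0 := by
    rcases smul_eq_zero.mp hdv with h | h
    · exact absurd h (ne_of_gt (hdet x hx))
    · exact h
  have hgj : ∀ j : Fin 3, g' (u j) = 0 := by
    intro j
    have := congrFun hvz j
    simp only [hv, Pi.zero_apply] at this
    rcases mul_eq_zero.mp this with h | h
    · exact absurd h (ne_of_gt hlam)
    · exact h
  refine ⟨hgd x hx, ?_⟩
  ext w
  have hw : w = ∑ j : Fin 3, w j • u j := by
    funext i
    simp [hu, Pi.single_apply, Finset.sum_apply]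
  rw [hw]
  simp [_root_.map_smul, hgj]

end Main

/-- If the first Piola–Kirchhoff stress `P = (−p + λ(det ∇y − 1)) cof ∇y` of an elastic
fluid is divergence free on a connected open set `U` where `det ∇y > 0`,
then `det ∇y` is constant on `U`. -/
theorem det_const_of_div_free_piola
    (U : Set (Fin 3 → ℝ)) (hU : IsOpen U) (hUconn : IsConnected U)
    (y : (Fin 3 → ℝ) → (Fin 3 → ℝ)) (hy : ContDiffOn ℝ 2 y U)
    (hdet : ∀ x ∈ U, 0 < (jac y x).det)
    (p lam : ℝ) (hlam : 0 < lam)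
    (P : (Fin 3 → ℝ) → Matrix (Fin 3) (Fin 3) ℝ)
    (hP : ∀ x, P x = (-p + lam * ((jac y x).det - 1)) • cof (jac y x))
    (hdiv : ∀ x ∈ U, ∀ i : Fin 3,
      (∑ j : Fin 3, fderiv ℝ (fun z => P z i j) x (Pi.single j 1)) = 0) :
    ∃ k : ℝ, ∀ x ∈ U, (jac y x).det = k := by
  have key := fun x hx =>
    piola_fderiv_det_eq_zero' U y hU hy hdet p lam hlam P hP hdiv x hx
  have hloc : ∀ z ∈ U, ∃ ε > 0, Metric.ball z ε ⊆ U ∧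
      ∀ w ∈ Metric.ball z ε, (jac y w).det = (jac y z).det := by
    intro z hz
    obtain ⟨ε, hε, hball⟩ := Metric.isOpen_iff.mp hU z hz
    refine ⟨ε, hε, hball, fun w hw => ?_⟩
    exact (convex_ball z ε).is_const_of_fderivWithin_eq_zero
      (fun a ha => (key a (hball ha)).1.differentiableWithinAt)
      (fun a ha => by
        rw [fderivWithin_of_isOpen Metric.isOpen_ball ha]; exact (key a (hball ha)).2)
      hw (Metric.mem_ball_self hε)
  obtain ⟨x₀, hx₀⟩ := hUconn.nonempty
  refine ⟨(jac y x₀).det, fun x hx => ?_⟩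
  by_contra hne
  set V : Set (Fin 3 → ℝ) := {z | z ∈ U ∧ (jac y z).det = (jac y x₀).det} with hV
  set W : Set (Fin 3 → ℝ) := {z | z ∈ U ∧ (jac y z).det ≠ (jac y x₀).det} with hW
  have hVopen : IsOpen V := by
    rw [Metric.isOpen_iff]
    rintro z ⟨hzU, hzv⟩
    obtain ⟨ε, hε, hball, hconst⟩ := hloc z hzU
    exact ⟨ε, hε, fun w hw => ⟨hball hw, (hconst w hw).trans hzv⟩⟩
  have hWopen : IsOpen W := by
    rw [Metric.isOpen_iff]
    rintro z ⟨hzU, hzv⟩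
    obtain ⟨ε, hε, hball, hconst⟩ := hloc z hzU
    exact ⟨ε, hε, fun w hw => ⟨hball hw, by rw [hconst w hw]; exact hzv⟩⟩
  obtain ⟨w, hwU, hwV, hwW⟩ := hUconn.isPreconnected V W hVopen hWopen
    (fun z hz => by
      by_cases h : (jac y z).det = (jac y x₀).det
      · exact Or.inl ⟨hz, h⟩
      · exact Or.inr ⟨hz, h⟩)
    ⟨x₀, hx₀, hx₀, rfl⟩ ⟨x, hx, hx, hne⟩
  exact hwW.2 hwV.2
end
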